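/- arXiv:1304.6851 — 3 statements merged into one kernel-verified Lean document; each statement's English description precedes it below -/
import Mathlib

section
/- Let R be a Noetherian commutative ring, I an ideal of R, and σ : R → R a finite flat ring endomorphism such that σ(I)·R and I generate the same adic topology (i.e. each of σ(I)R and I contains a power of the other). Then the I-adic completion R̂ of R satisfies R̂ ⊗_{R,σ} R ≅ R̂ canonically, i.e. the square formed by σ on R, the completion map R → R̂, and the induced endomorphism σ̂ on R̂ is cocartesian, and σ̂ : R̂ → R̂ is finite flat. -/
/-!
Write `R^σ` for `R` regarded as an `R`-algebra through `σ`. Since `R^σ` is a finite module over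
the Noetherian ring `R`, its `I`-adic completion is `R̂ ⊗_R R^σ`. On the other hand the `I`-adic
filtration of the `R`-module `R^σ` is the `σ(I)R`-adic filtration of the ring `R`, and as
`σ(I)R` and `I` have comparable powers, this completion is `R̂` again. Hence
`R̂ ⊗_R R^σ ≅ R̂`, and under this isomorphism `R̂ → R̂ ⊗_R R^σ` becomes `σ̂`: the square is a
pushout, and `σ̂` is finite and flat as a base change of `σ`.
-/

universe u v

namespace AdicCompletion

section mapRingHom

variable {R S : Type*} [CommRing R] [CommRing S] {φ : R →+* S} {I : Ideal R} {J : Ideal S}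
  {M : ℕ}

theorem factorPow_evalₐ {k l : ℕ} (hkl : k ≤ l) (x : AdicCompletion I R) :
    Ideal.Quotient.factorPow I hkl (evalₐ I l x) = evalₐ I k x := by
  induction x using induction_on with
  | h f => simp [AdicCompletion.Ideal.mk_eq_mk I hkl]

theorem pow_mul_le_comap_pow (h : I.map φ ^ M ≤ J) (k : ℕ) : I ^ (M * k) ≤ (J ^ k).comap φ := by
  rw [← Ideal.map_le_iff_le_comap, Ideal.map_pow, pow_mul]
  exact Ideal.pow_right_mono h k

theorem factorPow_comp_quotientMap_comp_evalₐ (h : I.map φ ^ M ≤ J) {k l : ℕ} (hkl : k ≤ l) :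
    (Ideal.Quotient.factorPow J hkl).comp
        ((Ideal.quotientMap _ φ (pow_mul_le_comap_pow h l)).comp (evalₐ I (M * l)).toRingHom) =
      (Ideal.quotientMap _ φ (pow_mul_le_comap_pow h k)).comp (evalₐ I (M * k)).toRingHom := by
  ext x
  obtain ⟨r, hr⟩ := Ideal.Quotient.mk_surjective (evalₐ I (M * l) x)
  simp only [RingHom.comp_apply, AlgHom.toRingHom_eq_coe, RingHom.coe_coe,
    ← factorPow_evalₐ (Nat.mul_le_mul_left M hkl) x, ← hr]
  rfl

variable (φ) in
noncomputable def mapRingHom (h : I.map φ ^ M ≤ J) : AdicCompletion I R →+* AdicCompletion J S :=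
  liftRingHom J _ (factorPow_comp_quotientMap_comp_evalₐ h)

variable (h : I.map φ ^ M ≤ J)

theorem evalₐ_mapRingHom (k : ℕ) (x : AdicCompletion I R) :
    evalₐ J k (mapRingHom φ h x) =
      Ideal.quotientMap _ φ (pow_mul_le_comap_pow h k) (evalₐ I (M * k) x) :=
  evalₐ_liftRingHom _ _ (factorPow_comp_quotientMap_comp_evalₐ h) k x

theorem mapRingHom_comp_algebraMap :
    (mapRingHom φ h).comp (algebraMap R (AdicCompletion I R)) =
      (algebraMap S (AdicCompletion J S)).comp φ := by
  ext r : 1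
  refine ext_evalₐ fun k ↦ ?_
  simp [evalₐ_mapRingHom, algebraMap_apply]

theorem mapRingHom_comp_mapRingHom_eq_id {ψ : S →+* R} (hψφ : ψ.comp φ = RingHom.id R)
    {a b : ℕ} (ha : 0 < a) (hb : 0 < b) (hIJ : I.map φ ^ a ≤ J) (hJI : J.map ψ ^ b ≤ I) :
    (mapRingHom ψ hJI).comp (mapRingHom φ hIJ) = RingHom.id (AdicCompletion I R) := by
  ext x : 1
  refine ext_evalₐ fun k ↦ ?_
  have hk : k ≤ a * (b * k) := le_mul_of_one_le_of_le ha (Nat.le_mul_of_pos_left k hb)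
  obtain ⟨r, hr⟩ := Ideal.Quotient.mk_surjective (evalₐ I (a * (b * k)) x)
  rw [RingHom.comp_apply, evalₐ_mapRingHom, evalₐ_mapRingHom, ← factorPow_evalₐ hk,
    RingHom.id_apply]
  simp only [← hr, Ideal.quotientMap_mk, ← RingHom.comp_apply ψ φ, hψφ]
  rfl

noncomputable def mapRingEquiv (e : R ≃+* S) {n m : ℕ} (hIJ : I.map e.toRingHom ^ n ≤ J)
    (hJI : J.map e.symm.toRingHom ^ m ≤ I) : AdicCompletion I R ≃+* AdicCompletion J S :=
  RingEquiv.ofRingHom (mapRingHom _ ((Ideal.pow_le_pow_right n.le_succ).trans hIJ))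
    (mapRingHom _ ((Ideal.pow_le_pow_right m.le_succ).trans hJI))
    (mapRingHom_comp_mapRingHom_eq_id e.toRingHom_comp_symm_toRingHom m.succ_pos n.succ_pos _ _)
    (mapRingHom_comp_mapRingHom_eq_id e.symm_toRingHom_comp_toRingHom n.succ_pos m.succ_pos _ _)

theorem mapRingEquiv_comp_algebraMap (e : R ≃+* S) {n m : ℕ}
    (hIJ : I.map e.toRingHom ^ n ≤ J) (hJI : J.map e.symm.toRingHom ^ m ≤ I) :
    (mapRingEquiv e hIJ hJI).toRingHom.comp (algebraMap R (AdicCompletion I R)) =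
      (algebraMap S (AdicCompletion J S)).comp e.toRingHom :=
  mapRingHom_comp_algebraMap ((Ideal.pow_le_pow_right n.le_succ).trans hIJ)

end mapRingHom

section baseChange

variable {R S : Type*} [CommRing R] [CommRing S] [Algebra R S] (I : Ideal R)

theorem pow_smul_top_eq_restrictScalars (k : ℕ) :
    (I ^ k • ⊤ : Submodule R S) =
      (I.map (algebraMap R S) ^ k • ⊤ : Ideal S).restrictScalars R := by
  rw [Ideal.smul_top_eq_map, Ideal.map_pow, smul_eq_mul, Ideal.mul_top]

noncomputable def quotientPowSMulTopEquiv (k : ℕ) :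
    (S ⧸ (I ^ k • ⊤ : Submodule R S)) ≃ₗ[R] S ⧸ (I.map (algebraMap R S) ^ k • ⊤ : Ideal S) :=
  (Submodule.quotEquivOfEq _ _ (pow_smul_top_eq_restrictScalars I k)).trans
    (Submodule.Quotient.restrictScalarsEquiv R _)

theorem transitionMap_quotientPowSMulTopEquiv {k l : ℕ} (hkl : k ≤ l)
    (x : S ⧸ (I ^ l • ⊤ : Submodule R S)) :
    transitionMap (I.map (algebraMap R S)) S hkl (quotientPowSMulTopEquiv I l x) =
      quotientPowSMulTopEquiv I k (transitionMap I S hkl x) := by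
  induction x using Submodule.Quotient.induction_on
  rfl

theorem transitionMap_quotientPowSMulTopEquiv_symm {k l : ℕ} (hkl : k ≤ l)
    (x : S ⧸ (I.map (algebraMap R S) ^ l • ⊤ : Ideal S)) :
    transitionMap I S hkl ((quotientPowSMulTopEquiv I l).symm x) =
      (quotientPowSMulTopEquiv I k).symm (transitionMap (I.map (algebraMap R S)) S hkl x) := by
  induction x using Submodule.Quotient.induction_on
  rfl

noncomputable instance :
    Algebra (AdicCompletion I R) (AdicCompletion (I.map (algebraMap R S)) S) :=
  (mapRingHom (algebraMap R S) (pow_one (I.map (algebraMap R S))).le).toAlgebra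

instance : IsScalarTower R (AdicCompletion I R) (AdicCompletion (I.map (algebraMap R S)) S) :=
  .of_algebraMap_eq' (mapRingHom_comp_algebraMap _).symm

noncomputable def equivMapAlgebraMap :
    AdicCompletion I S ≃ₗ[AdicCompletion I R] AdicCompletion (I.map (algebraMap R S)) S where
  toFun x := ⟨fun k ↦ quotientPowSMulTopEquiv I k (eval I S k x), fun hkl ↦ by
    rw [transitionMap_quotientPowSMulTopEquiv]
    exact congrArg _ (transitionMap_comp_eval_apply I S hkl x)⟩
  invFun y := ⟨fun k ↦ (quotientPowSMulTopEquiv I k).symm (eval _ S k y), fun hkl ↦ by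
    rw [transitionMap_quotientPowSMulTopEquiv_symm]
    exact congrArg _ (transitionMap_comp_eval_apply _ S hkl y)⟩
  map_add' x y := by
    ext k
    exact map_add _ _ _
  map_smul' a x := by
    induction a using induction_on with | h f =>
    induction x using induction_on with | h g =>
    ext k
    change Submodule.Quotient.mk (f.val k • g.val k) =
      Submodule.Quotient.mk (algebraMap R S (f.val (1 * k)) * g.val k)
    simp only [one_mul, Algebra.smul_def]
  left_inv x := by
    ext k
    exact LinearEquiv.symm_apply_apply _ _
  right_inv y := by
    ext k
    exact LinearEquiv.apply_symm_apply _ _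

end baseChange

theorem isPushout {R S : Type u} [CommRing R] [CommRing S] [Algebra R S] (I : Ideal R)
    [IsNoetherianRing R] [Module.Finite R S] :
    Algebra.IsPushout R (AdicCompletion I R) S (AdicCompletion (I.map (algebraMap R S)) S) :=
  ⟨.of_equiv ((ofTensorProductEquivOfFiniteNoetherian I S).trans (equivMapAlgebraMap I))
    fun s ↦ by
      rw [LinearEquiv.trans_apply, ofTensorProductEquivOfFiniteNoetherian_apply,
        ofTensorProduct_tmul, one_smul]
      rfl⟩

end AdicCompletion

theorem RingEquiv.existsUnique_comp {A D T : Type*} [NonAssocSemiring A] [NonAssocSemiring D]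
    [NonAssocSemiring T] (e : A ≃+* D) {P : (A →+* T) → Prop} (h : ∃! φ : A →+* T, P φ) :
    ∃! ψ : D →+* T, P (ψ.comp e.toRingHom) := by
  obtain ⟨φ, hφ, huniq⟩ := h
  refine ⟨φ.comp e.symm.toRingHom, ?_, fun ψ hψ ↦ ?_⟩
  · convert hφ
    ext
    simp
  · rw [← huniq _ hψ]
    ext
    simp

namespace Algebra.IsPushout

variable {R S R' S' : Type*} [CommSemiring R] [CommSemiring S] [CommSemiring R'] [CommSemiring S']
  [Algebra R S] [Algebra R R'] [Algebra R S'] [Algebra S S'] [Algebra R' S'] [IsScalarTower R S S']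
  [IsScalarTower R R' S'] [Algebra.IsPushout R S R' S'] {T : Type*} [CommSemiring T]

theorem existsUnique_ringHom (f : S →+* T) (g : R' →+* T)
    (hfg : f.comp (algebraMap R S) = g.comp (algebraMap R R')) :
    ∃! φ : S' →+* T, φ.comp (algebraMap S S') = f ∧ φ.comp (algebraMap R' S') = g := by
  let _ : Algebra R T := (f.comp (algebraMap R S)).toAlgebra
  let fR : S →ₐ[R] T := { f with commutes' := fun _ ↦ rfl }
  let gR : R' →ₐ[R] T := { g with commutes' := fun r ↦ (RingHom.congr_fun hfg r).symm }
  have hcomm : ∀ x y, fR x * gR y = gR y * fR x := fun _ _ ↦ mul_comm _ _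
  refine ⟨Algebra.pushoutDesc S' fR gR hcomm,
    ⟨RingHom.ext (Algebra.pushoutDesc_left S' fR gR hcomm),
      RingHom.ext (Algebra.pushoutDesc_right S' fR gR hcomm)⟩, ?_⟩
  rintro φ ⟨hφf, hφg⟩
  let φR : S' →ₐ[R] T := { φ with
    commutes' := fun r ↦ by
      rw [IsScalarTower.algebraMap_apply R S S']
      exact RingHom.congr_fun hφf _ }
  have : φR = Algebra.pushoutDesc S' fR gR hcomm := by
    refine Algebra.IsPushout.algHom_ext (S := S) (R' := R') S' ?_ ?_
    · rw [Algebra.lift_algHom_comp_right]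
      exact AlgHom.ext fun r' ↦ RingHom.congr_fun hφg r'
    · rw [Algebra.lift_algHom_comp_left]
      exact AlgHom.ext fun s ↦ RingHom.congr_fun hφf s
  exact congrArg AlgHom.toRingHom this

theorem existsUnique_ringHom_of_ringEquiv {S₀ D : Type*} [CommSemiring S₀] [CommSemiring D]
    (e : S' ≃+* D) (τ : S ≃+* S₀) {c : S₀ →+* D}
    (he : e.toRingHom.comp (algebraMap S S') = c.comp τ.toRingHom) (f : S₀ →+* T) (g : R' →+* T)
    (hfg : (f.comp τ.toRingHom).comp (algebraMap R S) = g.comp (algebraMap R R')) :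
    ∃! h : D →+* T, h.comp c = f ∧ h.comp (e.toRingHom.comp (algebraMap R' S')) = g := by
  obtain ⟨ψ, ⟨hψf, hψg⟩, huniq⟩ := e.existsUnique_comp (existsUnique_ringHom _ g hfg)
  have hf_iff : ∀ h : D →+* T,
      (h.comp e.toRingHom).comp (algebraMap S S') = f.comp τ.toRingHom ↔ h.comp c = f :=
    fun h ↦ by rw [RingHom.comp_assoc, he, ← RingHom.comp_assoc,
      RingHom.cancel_right (f := τ.toRingHom) τ.surjective]
  rw [RingHom.comp_assoc] at hψg
  exact ⟨ψ, ⟨(hf_iff ψ).1 hψf, hψg⟩, fun h ⟨hf, hg⟩ ↦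
    huniq h ⟨(hf_iff h).2 hf, by rw [RingHom.comp_assoc]; exact hg⟩⟩

end Algebra.IsPushout

/-- `R` regarded as an `R`-algebra through `σ`; `Twist.equiv` identifies it with `R` as a ring. -/
def Twist {R : Type*} [CommRing R] (_σ : R →+* R) : Type _ := R

namespace Twist

variable {R : Type*} [CommRing R] (σ : R →+* R)

instance : CommRing (Twist σ) := inferInstanceAs (CommRing R)

instance : Algebra R (Twist σ) := σ.toAlgebra

def equiv : Twist σ ≃+* R := RingEquiv.refl R

theorem equiv_comp_algebraMap : (equiv σ).toRingHom.comp (algebraMap R (Twist σ)) = σ :=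
  rfl

theorem equiv_symm_comp : (equiv σ).symm.toRingHom.comp σ = algebraMap R (Twist σ) :=
  rfl

variable (I : Ideal R) {n m : ℕ} (h1 : I ^ n ≤ I.map σ) (h2 : I.map σ ^ m ≤ I)

noncomputable def adicCompletionEquiv :
    AdicCompletion (I.map (algebraMap R (Twist σ))) (Twist σ) ≃+* AdicCompletion I R :=
  AdicCompletion.mapRingEquiv (equiv σ) (by rwa [Ideal.map_map, equiv_comp_algebraMap]) (by
    rw [← Ideal.map_pow, ← equiv_symm_comp, ← Ideal.map_map]
    exact Ideal.map_mono h1)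

theorem adicCompletionEquiv_comp_algebraMap :
    (adicCompletionEquiv σ I h1 h2).toRingHom.comp (algebraMap (Twist σ) _) =
      (algebraMap R (AdicCompletion I R)).comp (equiv σ).toRingHom :=
  AdicCompletion.mapRingEquiv_comp_algebraMap _ _ _

end Twist

theorem adicCompletion_frobenius_cocartesian_finite_flat
    (R : Type u) [CommRing R] [IsNoetherianRing R] (I : Ideal R)
    (σ : R →+* R) (hσfin : σ.Finite) (hσflat : σ.Flat)
    (n m : ℕ) (h1 : I ^ n ≤ I.map σ) (h2 : (I.map σ) ^ m ≤ I) :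
    ∃ σc : AdicCompletion I R →+* AdicCompletion I R,
      σc.comp (algebraMap R (AdicCompletion I R)) =
        (algebraMap R (AdicCompletion I R)).comp σ ∧
      σc.Finite ∧ σc.Flat ∧
      ∀ (T : Type v) [CommRing T] (f : R →+* T) (g : AdicCompletion I R →+* T),
        f.comp σ = g.comp (algebraMap R (AdicCompletion I R)) →
        ∃! h : AdicCompletion I R →+* T,
          h.comp (algebraMap R (AdicCompletion I R)) = f ∧ h.comp σc = g := by
  have : Module.Finite R (Twist σ) := hσfin
  have hpush := (AdicCompletion.isPushout (S := Twist σ) I).symm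
  let e := Twist.adicCompletionEquiv σ I h1 h2
  have he := Twist.adicCompletionEquiv_comp_algebraMap σ I h1 h2
  refine ⟨e.toRingHom.comp (algebraMap _ _), ?_, ?_, ?_, ?_⟩
  · rw [RingHom.comp_assoc, ← IsScalarTower.algebraMap_eq,
      IsScalarTower.algebraMap_eq R (Twist σ) (AdicCompletion (I.map (algebraMap R (Twist σ))) _),
      ← RingHom.comp_assoc, he, RingHom.comp_assoc, Twist.equiv_comp_algebraMap]
  · exact (RingHom.Finite.of_surjective _ e.surjective).comp
      (RingHom.finite_isStableUnderBaseChange R (Twist σ) _ _ hσfin)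
  · exact (RingHom.Flat.isStableUnderBaseChange R (Twist σ) _ _ hσflat).comp
      (RingHom.Flat.of_bijective e.bijective)
  · intro T _ f g hfg
    exact hpush.existsUnique_ringHom_of_ringEquiv e (Twist.equiv σ) he f g
      (by rwa [RingHom.comp_assoc, Twist.equiv_comp_algebraMap])
end

section
/- Let o_L be a complete discrete valuation ring with uniformizer π, residue field ℓ, and fraction field L. Let M and N be finite free o_L⟦z⟧-modules of the same rank s, and ψ : M → N an o_L⟦z⟧-linear map which becomes an isomorphism after inverting π. Suppose there exist injective endomorphisms F_M of M and F_N of N (semilinear over a common finite flat Frobenius σ of o_L⟦z⟧ lifting the r-Frobenius of ℓ and fixing z) intertwined by ψ, whose cokernels are finite free o_L-modules of the same o_L-rank and are annihilated by a power of (z − ζ) with ζ ∈ πo_L. Then ψ itself is an isomorphism. -/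
/-!
STATEMENT 11: Let `o_L = ℓ⟦π⟧` (with `ℓ` of characteristic `p` and `r = p^e`), and let
`σ : o_L⟦z⟧ → o_L⟦z⟧` be the `r`-Frobenius lift fixing `z` and raising coefficients to
`r`-th powers.  Let `M`, `N` be finite free `o_L⟦z⟧`-modules of the same rank `s` and
`ψ : M → N` an `o_L⟦z⟧`-linear map which becomes an isomorphism after inverting `π`.
Suppose there are injective `σ`-semilinear endomorphisms `F_M`, `F_N` intertwined by
`ψ`, whose cokernels (quotients by the `o_L⟦z⟧`-span of the image) are finite free
`o_L`-modules of the same `o_L`-rank and are annihilated by a power of `(z − ζ)` with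
`ζ ∈ π·o_L`.  Then `ψ` itself is an isomorphism.
-/

/-!
Fix bases of `M` and `N` and let `A`, `P`, `Q` be the matrices of `ψ`, `F_M`, `F_N`. Since `ψ` is
invertible up to `π^k`, `det A` divides a power of the prime `π`, so `det A = π^a · u` with `u` a
unit. The cokernel of `F_M` is killed by `(z - ζ)^d`, so `det P` divides a power of `z - ζ` and is
prime to `π`. Intertwining gives `det A · det P = det Q · σ(det A)`, and `σ(π) = π^r` with `r ≥ 2`
makes the right side divisible by `π^(2a)`; for `a > 0` this would force `π ∣ det P`.
-/

open PowerSeries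

/-- The `r = p^e`-Frobenius lift on `o_L⟦z⟧` (`o_L = ℓ⟦π⟧`) fixing `z`. -/
noncomputable def frobLift (ℓ : Type*) [Field ℓ] (p e : ℕ) [Fact p.Prime]
    [CharP (PowerSeries ℓ) p] :
    PowerSeries (PowerSeries ℓ) →+* PowerSeries (PowerSeries ℓ) :=
  PowerSeries.map (iterateFrobenius (PowerSeries ℓ) p e)

namespace PowerSeries

variable {R : Type*} [CommRing R]

theorem C_dvd_iff_forall_dvd_coeff (p : R) (f : R⟦X⟧) : C p ∣ f ↔ ∀ n, p ∣ coeff n f := by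
  refine ⟨fun ⟨g, hg⟩ n => ⟨coeff n g, by rw [hg, coeff_C_mul]⟩, fun h => ?_⟩
  choose g hg using h
  exact ⟨mk g, ext fun n => by rw [coeff_C_mul, coeff_mk, hg]⟩

theorem prime_C {p : R} (hp : Prime p) : Prime (C p : R⟦X⟧) := by
  have : (Ideal.span {p}).IsPrime := (Ideal.span_singleton_prime hp.ne_zero).mpr hp
  have hker : RingHom.ker (map (Ideal.Quotient.mk (Ideal.span {p}))) = Ideal.span {C p} := by
    ext f
    simp [RingHom.mem_ker, Ideal.mem_span_singleton, C_dvd_iff_forall_dvd_coeff,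
      PowerSeries.ext_iff, Ideal.Quotient.eq_zero_iff_mem]
  have hC : (C p : R⟦X⟧) ≠ 0 := fun h => hp.ne_zero (by simpa using congrArg (coeff 0) h)
  rw [← Ideal.span_singleton_prime hC, ← hker]
  exact RingHom.ker_isPrime _

theorem not_C_dvd_X_sub_C {p : R} (hp : ¬IsUnit p) (a : R) : ¬C p ∣ X - C a := by
  rw [C_dvd_iff_forall_dvd_coeff]
  exact fun h => hp (isUnit_of_dvd_one (by simpa [coeff_X, coeff_C] using h 1))

end PowerSeries

theorem isUnit_of_dvd_pow_of_mul_eq_mul_map {R F : Type*} [CommMonoidWithZero R]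
    [IsCancelMulZero R] [FunLike F R R] [MonoidHomClass F R R] (σ : F) {π x y z : R} {n : ℕ}
    (hπ : Prime π) (hσπ : π ^ 2 ∣ σ π) (hx : x ∣ π ^ n) (hy : ¬π ∣ y)
    (h : x * y = z * σ x) : IsUnit x := by
  obtain ⟨a, -, hxa⟩ := (dvd_prime_pow hπ n).mp hx
  obtain ⟨u, rfl⟩ := hxa.symm
  rcases a with _ | a
  · simp
  have hdvd : π ^ (a + 1) * π ∣ π ^ (a + 1) * (u * y) :=
    calc π ^ (a + 1) * π ∣ π ^ (2 * (a + 1)) := by rw [← pow_succ]; exact pow_dvd_pow _ (by omega)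
      _ ∣ σ (π ^ (a + 1)) := by rw [map_pow, pow_mul]; exact pow_dvd_pow_of_dvd hσπ _
      _ ∣ z * σ (π ^ (a + 1) * u) := by rw [map_mul]; exact (dvd_mul_right _ _).mul_left z
      _ = π ^ (a + 1) * (u * y) := by rw [← h, mul_assoc]
  rcases hπ.dvd_or_dvd ((mul_dvd_mul_iff_left (pow_ne_zero _ hπ.ne_zero)).mp hdvd) with hu | hu
  · exact absurd (isUnit_of_dvd_unit hu u.isUnit) hπ.not_isUnit
  · exact absurd hu hy

theorem Matrix.det_mul_det_of_mul_eq_smul_one {n R : Type*} [Fintype n] [DecidableEq n]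
    [CommRing R] {A B : Matrix n n R} {t : R} (h : A * B = t • 1) :
    A.det * B.det = t ^ Fintype.card n := by
  rw [← det_mul, h, det_smul, det_one, mul_one]

namespace LinearMap

open Module Submodule

section Semiring

variable {R₁ R₂ R₃ M₁ M₂ M₃ ι₁ ι₂ ι₃ : Type*} [CommSemiring R₁] [CommSemiring R₂]
  [CommSemiring R₃] [AddCommMonoid M₁] [AddCommMonoid M₂] [AddCommMonoid M₃]
  [Module R₁ M₁] [Module R₂ M₂] [Module R₃ M₃]

noncomputable def toMatrixₛₗ {σ : R₁ →+* R₂} (b₁ : Basis ι₁ R₁ M₁) (b₂ : Basis ι₂ R₂ M₂)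
    (f : M₁ →ₛₗ[σ] M₂) : Matrix ι₂ ι₁ R₂ :=
  Matrix.of fun i j => b₂.repr (f (b₁ j)) i

theorem toMatrixₛₗ_eq_toMatrix {N : Type*} [AddCommMonoid N] [Module R₁ N] [Fintype ι₁]
    [Fintype ι₂] [DecidableEq ι₁] (b₁ : Basis ι₁ R₁ M₁) (b₂ : Basis ι₂ R₁ N) (f : M₁ →ₗ[R₁] N) :
    toMatrixₛₗ b₁ b₂ f = toMatrix b₁ b₂ f :=
  Matrix.ext fun i j => (toMatrix_apply b₁ b₂ f i j).symm

theorem toMatrixₛₗ_comp [Fintype ι₂] {σ₁₂ : R₁ →+* R₂} {σ₂₃ : R₂ →+* R₃} {σ₁₃ : R₁ →+* R₃}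
    [RingHomCompTriple σ₁₂ σ₂₃ σ₁₃] (b₁ : Basis ι₁ R₁ M₁) (b₂ : Basis ι₂ R₂ M₂)
    (b₃ : Basis ι₃ R₃ M₃) (f : M₁ →ₛₗ[σ₁₂] M₂) (g : M₂ →ₛₗ[σ₂₃] M₃) :
    toMatrixₛₗ b₁ b₃ (g.comp f) = toMatrixₛₗ b₂ b₃ g * (toMatrixₛₗ b₁ b₂ f).map σ₂₃ := by
  ext i j
  simp only [toMatrixₛₗ, Matrix.of_apply, Matrix.mul_apply, Matrix.map_apply, comp_apply]
  conv_lhs => rw [← b₂.sum_repr (f (b₁ j))]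
  simp only [map_sum, map_smulₛₗ, Finsupp.coe_finsetSum, Finset.sum_apply, Finsupp.smul_apply,
    smul_eq_mul, RingHom.id_apply, mul_comm]

theorem span_range_eq_span_range_comp_basis [Fintype ι₁] {σ : R₁ →+* R₂}
    (f : M₁ →ₛₗ[σ] M₂) (b : Basis ι₁ R₁ M₁) :
    span R₂ (Set.range f) = span R₂ (Set.range (f ∘ b)) := by
  refine le_antisymm (span_le.mpr ?_) (span_mono (Set.range_comp_subset_range b f))
  rintro _ ⟨m, rfl⟩
  rw [← b.sum_repr m, map_sum]
  exact sum_mem fun i _ => by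
    rw [map_smulₛₗ]; exact smul_mem _ _ (subset_span ⟨i, rfl⟩)

end Semiring

theorem det_toMatrixₛₗ_dvd_pow {R₁ R₂ M₁ M₂ ι : Type*} [CommSemiring R₁] [CommRing R₂]
    [AddCommMonoid M₁] [AddCommGroup M₂] [Module R₁ M₁] [Module R₂ M₂] [Fintype ι]
    [DecidableEq ι] {σ : R₁ →+* R₂} (b₁ : Basis ι R₁ M₁) (b₂ : Basis ι R₂ M₂)
    (f : M₁ →ₛₗ[σ] M₂) {t : R₂} (ht : ∀ m : M₂, t • m ∈ span R₂ (Set.range f)) :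
    (toMatrixₛₗ b₁ b₂ f).det ∣ t ^ Fintype.card ι := by
  have hw (j : ι) : ∃ w : ι → R₂, ∑ i, w i • f (b₁ i) = t • b₂ j :=
    (mem_span_range_iff_exists_fun R₂).mp (span_range_eq_span_range_comp_basis f b₁ ▸ ht (b₂ j))
  choose w hw using hw
  refine Dvd.intro (Matrix.of fun i j => w j i).det (Matrix.det_mul_det_of_mul_eq_smul_one ?_)
  ext i j
  have := congrArg (fun x => b₂.repr x i) (hw j)
  simpa [toMatrixₛₗ, Matrix.mul_apply, Matrix.one_apply, mul_comm, Finsupp.single_apply,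
    eq_comm] using this

theorem det_toMatrix_dvd_pow_of_comp_eq_smul_id {R M N ι : Type*} [CommRing R]
    [AddCommGroup M] [AddCommGroup N] [Module R M] [Module R N] [Fintype ι] [DecidableEq ι]
    (b : Basis ι R M) (c : Basis ι R N) {ψ : M →ₗ[R] N} {φ : N →ₗ[R] M} {t : R}
    (h : φ ∘ₗ ψ = t • (LinearMap.id : M →ₗ[R] M)) : (toMatrix b c ψ).det ∣ t ^ Fintype.card ι :=
  Dvd.intro_left _ <| Matrix.det_mul_det_of_mul_eq_smul_one <| by
    rw [← toMatrix_comp b c b, h, map_smul, toMatrix_id]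

theorem det_toMatrix_mul_det_toMatrixₛₗ_of_comp_eq {R M N ι : Type*} [CommRing R]
    [AddCommGroup M] [AddCommGroup N] [Module R M] [Module R N] [Fintype ι] [DecidableEq ι]
    {σ : R →+* R} (b : Basis ι R M) (c : Basis ι R N) {ψ : M →ₗ[R] N} {F : M →ₛₗ[σ] M}
    {G : N →ₛₗ[σ] N} (h : ψ ∘ₛₗ F = G ∘ₛₗ ψ) :
    (toMatrix b c ψ).det * (toMatrixₛₗ b b F).det =
      (toMatrixₛₗ c c G).det * σ (toMatrix b c ψ).det := by
  have hmat := toMatrixₛₗ_comp b b c F ψ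
  rw [h, toMatrixₛₗ_comp b c c ψ G, toMatrixₛₗ_eq_toMatrix] at hmat
  rw [RingHom.map_det, RingHom.mapMatrix_apply, ← Matrix.det_mul, ← Matrix.det_mul, hmat]
  simp

end LinearMap

theorem psi_isomorphism_of_frobenius_intertwined_general
    (ℓ : Type*) [Field ℓ] (p e : ℕ) [Fact p.Prime]
    [CharP (PowerSeries ℓ) p] (he : 1 ≤ e)
    (M N : Type*) [AddCommGroup M] [AddCommGroup N]
    [Module (PowerSeries (PowerSeries ℓ)) M] [Module (PowerSeries (PowerSeries ℓ)) N]
    [Module.Free (PowerSeries (PowerSeries ℓ)) M] [Module.Finite (PowerSeries (PowerSeries ℓ)) M]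
    [Module.Free (PowerSeries (PowerSeries ℓ)) N] [Module.Finite (PowerSeries (PowerSeries ℓ)) N]
    (s : ℕ)
    (hrkM : Module.finrank (PowerSeries (PowerSeries ℓ)) M = s)
    (hrkN : Module.finrank (PowerSeries (PowerSeries ℓ)) N = s)
    (FM : M →ₛₗ[frobLift ℓ p e] M) (FN : N →ₛₗ[frobLift ℓ p e] N)
    (ψ : M →ₗ[PowerSeries (PowerSeries ℓ)] N)
    (hint : ∀ m : M, ψ (FM m) = FN (ψ m))
    -- `ψ` becomes an isomorphism after inverting `π`:
    (hψiso : ∃ (φ : N →ₗ[PowerSeries (PowerSeries ℓ)] M) (k : ℕ),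
      φ.comp ψ = ((PowerSeries.C : PowerSeries ℓ →+* PowerSeries (PowerSeries ℓ)) ((PowerSeries.X : PowerSeries ℓ) ^ k)) •
          (LinearMap.id : M →ₗ[PowerSeries (PowerSeries ℓ)] M) ∧
      ψ.comp φ = ((PowerSeries.C : PowerSeries ℓ →+* PowerSeries (PowerSeries ℓ)) ((PowerSeries.X : PowerSeries ℓ) ^ k)) •
          (LinearMap.id : N →ₗ[PowerSeries (PowerSeries ℓ)] N))
    (ζ : PowerSeries ℓ)
    (d : ℕ)
    -- the cokernels are annihilated by `(z − ζ)^d`: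
    (hannM : ∀ m : M, (((PowerSeries.X : PowerSeries (PowerSeries ℓ)) -
        (PowerSeries.C : PowerSeries ℓ →+* PowerSeries (PowerSeries ℓ)) ζ) ^ d) • m ∈
        Submodule.span (PowerSeries (PowerSeries ℓ)) (Set.range FM)) :
    Function.Bijective ψ := by
  obtain ⟨φ, k, hφψ, -⟩ := hψiso
  let b := Module.finBasisOfFinrankEq _ M hrkM
  let c := Module.finBasisOfFinrankEq _ N hrkN
  set π : PowerSeries (PowerSeries ℓ) := C X
  have hπ : Prime π := prime_C X_prime
  have hσπ : π ^ 2 ∣ frobLift ℓ p e π := by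
    rw [frobLift, map_C, iterateFrobenius_def, map_pow]
    exact pow_dvd_pow _ ((Fact.out : p.Prime).two_le.trans (Nat.le_self_pow (by omega) p))
  have hdetA : (LinearMap.toMatrix b c ψ).det ∣ π ^ (k * s) := by
    simpa [π, pow_mul] using LinearMap.det_toMatrix_dvd_pow_of_comp_eq_smul_id b c hφψ
  have hdetFM : ¬π ∣ (LinearMap.toMatrixₛₗ b b FM).det := fun h =>
    not_C_dvd_X_sub_C X_prime.not_isUnit ζ <| hπ.dvd_of_dvd_pow <| hπ.dvd_of_dvd_pow <|
      h.trans (LinearMap.det_toMatrixₛₗ_dvd_pow b b FM hannM)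
  have hunit := isUnit_of_dvd_pow_of_mul_eq_mul_map (frobLift ℓ p e) hπ hσπ hdetA hdetFM
    (LinearMap.det_toMatrix_mul_det_toMatrixₛₗ_of_comp_eq b c (LinearMap.ext hint))
  exact (LinearEquiv.ofIsUnitDet hunit).bijective

theorem psi_isomorphism_of_frobenius_intertwined
    (ℓ : Type*) [Field ℓ] (p e : ℕ) [Fact p.Prime] [CharP ℓ p]
    [CharP (PowerSeries ℓ) p] (he : 1 ≤ e)
    -- `ℓ` is a finite extension of `ℓ^r`:
    (hℓ : (iterateFrobenius ℓ p e).Finite)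
    (M N : Type*) [AddCommGroup M] [AddCommGroup N]
    [Module (PowerSeries (PowerSeries ℓ)) M] [Module (PowerSeries (PowerSeries ℓ)) N]
    [Module (PowerSeries ℓ) M] [IsScalarTower (PowerSeries ℓ) (PowerSeries (PowerSeries ℓ)) M]
    [Module (PowerSeries ℓ) N] [IsScalarTower (PowerSeries ℓ) (PowerSeries (PowerSeries ℓ)) N]
    [Module.Free (PowerSeries (PowerSeries ℓ)) M] [Module.Finite (PowerSeries (PowerSeries ℓ)) M]
    [Module.Free (PowerSeries (PowerSeries ℓ)) N] [Module.Finite (PowerSeries (PowerSeries ℓ)) N]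
    (s : ℕ)
    (hrkM : Module.finrank (PowerSeries (PowerSeries ℓ)) M = s)
    (hrkN : Module.finrank (PowerSeries (PowerSeries ℓ)) N = s)
    (FM : M →ₛₗ[frobLift ℓ p e] M) (FN : N →ₛₗ[frobLift ℓ p e] N)
    (hFM : Function.Injective FM) (hFN : Function.Injective FN)
    (ψ : M →ₗ[PowerSeries (PowerSeries ℓ)] N)
    (hint : ∀ m : M, ψ (FM m) = FN (ψ m))
    -- `ψ` becomes an isomorphism after inverting `π`:
    (hψiso : ∃ (φ : N →ₗ[PowerSeries (PowerSeries ℓ)] M) (k : ℕ),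
      φ.comp ψ = ((PowerSeries.C : PowerSeries ℓ →+* PowerSeries (PowerSeries ℓ)) ((PowerSeries.X : PowerSeries ℓ) ^ k)) •
          (LinearMap.id : M →ₗ[PowerSeries (PowerSeries ℓ)] M) ∧
      ψ.comp φ = ((PowerSeries.C : PowerSeries ℓ →+* PowerSeries (PowerSeries ℓ)) ((PowerSeries.X : PowerSeries ℓ) ^ k)) •
          (LinearMap.id : N →ₗ[PowerSeries (PowerSeries ℓ)] N))
    (ζ : PowerSeries ℓ) (hζ : ζ ∈ Ideal.span {(PowerSeries.X : PowerSeries ℓ)})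
    (d : ℕ)
    -- the cokernels are annihilated by `(z − ζ)^d`:
    (hannM : ∀ m : M, (((PowerSeries.X : PowerSeries (PowerSeries ℓ)) -
        (PowerSeries.C : PowerSeries ℓ →+* PowerSeries (PowerSeries ℓ)) ζ) ^ d) • m ∈
        Submodule.span (PowerSeries (PowerSeries ℓ)) (Set.range FM))
    (hannN : ∀ n : N, (((PowerSeries.X : PowerSeries (PowerSeries ℓ)) -
        (PowerSeries.C : PowerSeries ℓ →+* PowerSeries (PowerSeries ℓ)) ζ) ^ d) • n ∈
        Submodule.span (PowerSeries (PowerSeries ℓ)) (Set.range FN))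
    -- the cokernels are finite free `o_L`-modules of the same rank:
    [Module.Finite (PowerSeries ℓ)
      (M ⧸ Submodule.span (PowerSeries (PowerSeries ℓ)) (Set.range FM))]
    [Module.Free (PowerSeries ℓ)
      (M ⧸ Submodule.span (PowerSeries (PowerSeries ℓ)) (Set.range FM))]
    [Module.Finite (PowerSeries ℓ)
      (N ⧸ Submodule.span (PowerSeries (PowerSeries ℓ)) (Set.range FN))]
    [Module.Free (PowerSeries ℓ)
      (N ⧸ Submodule.span (PowerSeries (PowerSeries ℓ)) (Set.range FN))]
    (hrkcok : Module.finrank (PowerSeries ℓ)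
        (M ⧸ Submodule.span (PowerSeries (PowerSeries ℓ)) (Set.range FM)) =
      Module.finrank (PowerSeries ℓ)
        (N ⧸ Submodule.span (PowerSeries (PowerSeries ℓ)) (Set.range FN))) :
    Function.Bijective ψ :=
  psi_isomorphism_of_frobenius_intertwined_general ℓ p e he M N s hrkM hrkN FM FN ψ hint hψiso ζ d
    hannM
end

section
/- Let o_L be a complete discrete valuation ring with uniformizer π, fraction field L, residue field ℓ. Let M be an o_L⟨z⟩-submodule of a finite free L⟨z⟩-module M_L, defined as M = M_L ∩ ψ^{-1}(N̂) for a finite free o_L⟦z⟧-module N̂ inside M_L ⊗_{L⟨z⟩} o_L⟦z⟧[1/π] via an isomorphism ψ : M_L ⊗ o_L⟦z⟧[1/π] ≅ N̂[1/π]. Then M is a finitely generated o_L⟨z⟩-module, and M[1/π] = M_L. -/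
/-!
The inverse of `ψ` has finitely many matrix entries in `o_L⟦z⟧[1/π]`, so a single power `π^N`
clears all denominators of `ψ⁻¹(N̂)`. Since `L⟨z⟩ ∩ o_L⟦z⟧ = o_L⟨z⟩`, every `x ∈ M` then
satisfies `π^N x ∈ o_L⟨z⟩^m`: `M` lies in the finitely generated module `π^{-N} o_L⟨z⟩^m` over
the Noetherian ring `o_L⟨z⟩`, hence is finitely generated. Conversely, clearing the finitely many
denominators of `ψ(y)` puts a `π`-power multiple of any `y ∈ M_L` into `M`.
-/

open IsLocalization

theorem IsLocalization.exists_smul_isInteger_linearMap {R S : Type*} [CommRing R] [CommRing S]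
    [Algebra R S] (M : Submonoid R) [IsLocalization M S] {ι κ : Type*} [Finite ι] [Finite κ]
    (T : (κ → S) →ₗ[S] (ι → S)) :
    ∃ s : M, ∀ v : κ → S, (∀ j, IsInteger R (v j)) → ∀ i, IsInteger R ((s : R) • T v i) := by
  classical
  have := Fintype.ofFinite κ
  obtain ⟨s, hs⟩ := exist_integer_multiples_of_finite M
    fun p : κ × ι => T (fun j => if p.1 = j then 1 else 0) p.2
  refine ⟨s, fun v hv i => ?_⟩
  rw [T.pi_apply_eq_sum_univ v, Finset.sum_apply, Finset.smul_sum]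
  refine Subsemiring.sum_mem _ fun j _ => ?_
  rw [Pi.smul_apply, smul_eq_mul, ← mul_smul_comm]
  exact isInteger_mul (hv j) (hs (j, i))

theorem Submodule.fg_of_forall_smul_isInteger {R S : Type*} [CommRing R] [IsNoetherianRing R]
    [CommRing S] [Algebra R S] (M : Submonoid R) [IsLocalization M S] {ι : Type*} [Finite ι]
    (N : Submodule R (ι → S)) (s : M) (h : ∀ x ∈ N, ∀ i, IsInteger R ((s : R) • x i)) :
    N.FG := by
  let L : (ι → R) →ₗ[R] (ι → S) := mk' S (1 : R) s • (Algebra.linearMap R S).compLeft ι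
  refine Submodule.FG.of_le_of_isNoetherian (T := LinearMap.range L) fun x hx => ?_
  choose a ha using h x hx
  refine ⟨a, funext fun i => ?_⟩
  simp [L, ha i, Algebra.smul_def, ← mul_assoc]

section IntersectionLattice

variable {O B A A' : Type*} [CommRing O] [CommRing B] [CommRing A] [CommRing A'] [Algebra O A]
  [Algebra B A'] {f : O →+* B} {g : A →+* A'} {ι κ : Type*}

theorem map_smul_of_comp_algebraMap_eq (hg : g.comp (algebraMap O A) = (algebraMap B A').comp f)
    (a : O) (x : A) : g (a • x) = f a • g x := by
  rw [Algebra.smul_def, Algebra.smul_def, map_mul, ← RingHom.comp_apply g, hg, RingHom.comp_apply]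

theorem compLeft_smul_of_comp_algebraMap_eq
    (hg : g.comp (algebraMap O A) = (algebraMap B A').comp f) (a : O) (x : ι → A) :
    g.compLeft ι (a • x) = f a • g.compLeft ι x :=
  funext fun i => map_smul_of_comp_algebraMap_eq hg a (x i)

/-- The paper's `M = M_L ∩ ψ⁻¹(N̂)`, for `M_L = ι → A` and `N̂ = κ → B`. -/
def intersectionLattice (hg : g.comp (algebraMap O A) = (algebraMap B A').comp f)
    (ψ : (ι → A') ≃ₗ[A'] (κ → A')) : Submodule O (ι → A) where
  carrier := {x | ∃ b : κ → B, (algebraMap B A').compLeft κ b = ψ (g.compLeft ι x)}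
  zero_mem' := ⟨0, by simp only [map_zero]⟩
  add_mem' := by
    rintro x y ⟨bx, hx⟩ ⟨by', hy⟩
    exact ⟨bx + by', by rw [map_add, map_add, map_add, hx, hy]⟩
  smul_mem' := by
    rintro a x ⟨b, hb⟩
    refine ⟨f a • b, ?_⟩
    rw [compLeft_smul_of_comp_algebraMap_eq hg, ← algebraMap_smul A' (f a) (g.compLeft ι x),
      map_smul ψ, ← hb]
    ext j
    simp [Algebra.smul_def]

theorem exists_pow_smul_isInteger_of_mem_intersectionLattice {π : O}
    [IsLocalization (Submonoid.powers (f π)) A'] [Finite ι] [Finite κ]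
    (hg : g.comp (algebraMap O A) = (algebraMap B A').comp f)
    (hint : ∀ x : A, IsInteger B (g x) → IsInteger O x) (ψ : (ι → A') ≃ₗ[A'] (κ → A')) :
    ∃ N : ℕ, ∀ x ∈ intersectionLattice hg ψ, ∀ i, IsInteger O (π ^ N • x i) := by
  obtain ⟨⟨_, N, rfl⟩, hN⟩ :=
    exists_smul_isInteger_linearMap (Submonoid.powers (f π)) ψ.symm.toLinearMap
  refine ⟨N, fun x ⟨b, hb⟩ i => hint _ ?_⟩
  have hx : ∀ i, g (x i) = ψ.symm ((algebraMap B A').compLeft κ b) i :=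
    congrFun (show g.compLeft ι x = _ by rw [hb, ψ.symm_apply_apply])
  rw [map_smul_of_comp_algebraMap_eq hg, map_pow, hx]
  exact hN _ (fun j => ⟨b j, rfl⟩) i

theorem exists_pow_smul_mem_intersectionLattice {π : O}
    [IsLocalization (Submonoid.powers (f π)) A'] [Finite κ]
    (hg : g.comp (algebraMap O A) = (algebraMap B A').comp f) (ψ : (ι → A') ≃ₗ[A'] (κ → A'))
    (y : ι → A) : ∃ k : ℕ, π ^ k • y ∈ intersectionLattice hg ψ := by
  obtain ⟨⟨_, k, rfl⟩, hk⟩ :=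
    exist_integer_multiples_of_finite (Submonoid.powers (f π)) (ψ (g.compLeft ι y))
  choose b hb using hk
  refine ⟨k, b, ?_⟩
  rw [compLeft_smul_of_comp_algebraMap_eq hg, map_pow, ← algebraMap_smul A', map_smul ψ]
  ext j
  simpa [Algebra.smul_def] using hb j

theorem fg_intersectionLattice [IsNoetherianRing O] (π : O)
    [IsLocalization (Submonoid.powers π) A] [IsLocalization (Submonoid.powers (f π)) A']
    [Finite ι] [Finite κ] (hg : g.comp (algebraMap O A) = (algebraMap B A').comp f)
    (hint : ∀ x : A, IsInteger B (g x) → IsInteger O x) (ψ : (ι → A') ≃ₗ[A'] (κ → A')) :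
    (intersectionLattice hg ψ).FG := by
  obtain ⟨N, hN⟩ := exists_pow_smul_isInteger_of_mem_intersectionLattice (π := π) hg hint ψ
  exact Submodule.fg_of_forall_smul_isInteger (Submonoid.powers π) _ ⟨π ^ N, N, rfl⟩ hN

end IntersectionLattice

theorem intersection_model_finitely_generated_general
    (O : Type*) [CommRing O] [IsNoetherianRing O]
    (B : Type*) [CommRing B] (f : O →+* B)
    (π : O)
    (g : Localization.Away π →+* Localization.Away (f π))
    (hg : g.comp (algebraMap O (Localization.Away π)) =
      (algebraMap B (Localization.Away (f π))).comp f)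
    (hint : ∀ x : Localization.Away π,
      (∃ b : B, algebraMap B (Localization.Away (f π)) b = g x) →
      ∃ a : O, algebraMap O (Localization.Away π) a = x)
    (m n : ℕ)
    (ψ : (Fin m → Localization.Away (f π)) ≃ₗ[Localization.Away (f π)]
      (Fin n → Localization.Away (f π))) :
    letI S : Set (Fin m → Localization.Away π) :=
      {x | ∃ b : Fin n → B,
        (fun i => algebraMap B (Localization.Away (f π)) (b i)) = ψ (fun i => g (x i))}
    (∃ s : Finset (Fin m → Localization.Away π),
      ↑s ⊆ S ∧ S ⊆ (Submodule.span O (s : Set (Fin m → Localization.Away π)) : Set _)) ∧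
    (∀ y : Fin m → Localization.Away π, ∃ k : ℕ, (π ^ k) • y ∈ S) := by
  obtain ⟨t, ht⟩ := fg_intersectionLattice π hg hint ψ
  exact ⟨⟨t, Submodule.subset_span.trans ht.le, ht.ge⟩,
    exists_pow_smul_mem_intersectionLattice hg ψ⟩

theorem intersection_model_finitely_generated
    (O : Type*) [CommRing O] [IsNoetherianRing O]
    (B : Type*) [CommRing B] (f : O →+* B) (hf : Function.Injective f)
    (π : O) (hπ : π ∈ nonZeroDivisors O) (hπB : f π ∈ nonZeroDivisors B)
    (g : Localization.Away π →+* Localization.Away (f π))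
    (hg : g.comp (algebraMap O (Localization.Away π)) =
      (algebraMap B (Localization.Away (f π))).comp f)
    (hint : ∀ x : Localization.Away π,
      (∃ b : B, algebraMap B (Localization.Away (f π)) b = g x) →
      ∃ a : O, algebraMap O (Localization.Away π) a = x)
    (m n : ℕ)
    (ψ : (Fin m → Localization.Away (f π)) ≃ₗ[Localization.Away (f π)]
      (Fin n → Localization.Away (f π))) :
    letI S : Set (Fin m → Localization.Away π) :=
      {x | ∃ b : Fin n → B,
        (fun i => algebraMap B (Localization.Away (f π)) (b i)) = ψ (fun i => g (x i))}
    (∃ s : Finset (Fin m → Localization.Away π),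
      ↑s ⊆ S ∧ S ⊆ (Submodule.span O (s : Set (Fin m → Localization.Away π)) : Set _)) ∧
    (∀ y : Fin m → Localization.Away π, ∃ k : ℕ, (π ^ k) • y ∈ S) :=
  intersection_model_finitely_generated_general O B f π g hg hint m n ψ
end
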